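/- arXiv:1903.07041 — 3 statements merged into one kernel-verified Lean document; each statement's English description precedes it below -/
import Mathlib

section
/- Fix positive weights w_1,…,w_ℓ > 0. If x̄ ∈ X solves all ℓ weighted-constraint subproblems simultaneously, i.e., for each k ∈ {1,…,ℓ}, x̄ minimizes f_k(x) over the set {x ∈ X : w_i f_i(x) ≤ w_k f_k(x) for all i ≠ k}, then x̄ is a weakly efficient point of the multi-objective problem (f_1,…,f_ℓ) on X. -/
/-! A point `x` strictly dominating `xbar` is feasible for the subproblem whose index `k`
maximises `w i * f i x`, so optimality of `xbar` there gives `f k xbar ≤ f k x`,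
contradicting `f k x < f k xbar`. -/

theorem not_exists_forall_lt_of_forall_weighted_optimal {ι σ : Type*} [Finite ι] [Nonempty ι]
    (X : Set σ) (f : ι → σ → ℝ) (w : ι → ℝ) (xbar : σ)
    (hopt : ∀ k, ∀ x ∈ X, (∀ i, i ≠ k → w i * f i x ≤ w k * f k x) → f k xbar ≤ f k x) :
    ¬ ∃ x ∈ X, ∀ i, f i x < f i xbar := by
  rintro ⟨x, hxX, hdom⟩
  obtain ⟨k, hk⟩ := Finite.exists_max fun i => w i * f i x
  exact (hopt k x hxX fun i _ => hk i).not_gt (hdom k)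

theorem stmt_2_general {σ : Type*} {ℓ : ℕ} (hl : 0 < ℓ) (X : Set σ)
    (f : Fin ℓ → σ → ℝ) (w : Fin ℓ → ℝ) (xbar : σ)
    (hopt : ∀ k : Fin ℓ, ∀ x ∈ X,
      (∀ i : Fin ℓ, i ≠ k → w i * f i x ≤ w k * f k x) → f k xbar ≤ f k x) :
    ¬ ∃ x ∈ X, ∀ i, f i x < f i xbar :=
  have : NeZero ℓ := ⟨hl.ne'⟩
  not_exists_forall_lt_of_forall_weighted_optimal X f w xbar hopt

/-- If xbar solves all ℓ weighted-constraint subproblems simultaneously then it is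
weakly efficient. -/
theorem stmt_2 {σ : Type*} {ℓ : ℕ} (hl : 0 < ℓ) (X : Set σ)
    (f : Fin ℓ → σ → ℝ) (hpos : ∀ x ∈ X, ∀ i, 0 < f i x)
    (w : Fin ℓ → ℝ) (hw : ∀ i, 0 < w i) (hsum : ∑ i, w i = 1)
    (xbar : σ) (hxbar : xbar ∈ X)
    (hfeas : ∀ k : Fin ℓ, ∀ i : Fin ℓ, i ≠ k → w i * f i xbar ≤ w k * f k xbar)
    (hopt : ∀ k : Fin ℓ, ∀ x ∈ X,
      (∀ i : Fin ℓ, i ≠ k → w i * f i x ≤ w k * f k x) → f k xbar ≤ f k x) :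
    ¬ ∃ x ∈ X, ∀ i, f i x < f i xbar :=
  stmt_2_general hl X f w xbar hopt
end

section
/- (Removal of dominated points, Proposition 3.3) Fix positive weights w with Σ w_i = 1 and suppose each weighted-constraint subproblem (P_w^j), j = 1,…,ℓ, has a nonempty solution set S_w^j. Suppose for some k there exists x̄_k ∈ S_w^k such that for every r ≠ k there exists x̄_r ∈ S_w^r with f_r(x̄_r) ≥ f_r(x̄_k). Then x̄_k is a weakly efficient point of the multi-objective problem. -/
/-!
A point `x` is feasible for `(P_w^m)` whenever `m` maximizes `i ↦ w i * f i x`. If `x` strictly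
improved `x̄_k` in every objective, then for such an `m` the solution `x̄_m` of `(P_w^m)` (`x̄_k`
itself when `m = k`) would satisfy `f_m(x̄_m) ≤ f_m(x) < f_m(x̄_k) ≤ f_m(x̄_m)`.
-/

/-- The solution set of the k-th weighted-constraint subproblem (P_w^k). -/
def SolWC {σ : Type*} {ℓ : ℕ} (X : Set σ) (f : Fin ℓ → σ → ℝ)
    (w : Fin ℓ → ℝ) (k : Fin ℓ) (x : σ) : Prop :=
  x ∈ X ∧ (∀ i : Fin ℓ, i ≠ k → w i * f i x ≤ w k * f k x) ∧
    ∀ y ∈ X, (∀ i : Fin ℓ, i ≠ k → w i * f i y ≤ w k * f k y) → f k x ≤ f k y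

theorem exists_weighted_constraint_feasible {σ : Type*} {ℓ : ℕ} [Nonempty (Fin ℓ)]
    (f : Fin ℓ → σ → ℝ) (w : Fin ℓ → ℝ) (x : σ) :
    ∃ m, ∀ i, i ≠ m → w i * f i x ≤ w m * f m x := by
  obtain ⟨m, hm⟩ := Finite.exists_max fun i => w i * f i x
  exact ⟨m, fun i _ => hm i⟩

theorem SolWC.le_of_feasible {σ : Type*} {ℓ : ℕ} {X : Set σ} {f : Fin ℓ → σ → ℝ}
    {w : Fin ℓ → ℝ} {k : Fin ℓ} {x y : σ} (hx : SolWC X f w k x) (hy : y ∈ X)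
    (hfeas : ∀ i, i ≠ k → w i * f i y ≤ w k * f k y) : f k x ≤ f k y :=
  hx.2.2 y hy hfeas

theorem stmt_3_general {σ : Type*} {ℓ : ℕ} (X : Set σ) (f : Fin ℓ → σ → ℝ)
    (w : Fin ℓ → ℝ)
    (k : Fin ℓ) (xbark : σ) (hxbark : SolWC X f w k xbark)
    (hdom : ∀ r : Fin ℓ, r ≠ k → ∃ xbarr, SolWC X f w r xbarr ∧ f r xbark ≤ f r xbarr) :
    ¬ ∃ x ∈ X, ∀ i, f i x < f i xbark := by
  rintro ⟨x, hxX, hlt⟩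
  have : Nonempty (Fin ℓ) := ⟨k⟩
  obtain ⟨m, hfeas⟩ := exists_weighted_constraint_feasible f w x
  obtain ⟨xm, hxm, hle⟩ : ∃ xm, SolWC X f w m xm ∧ f m xbark ≤ f m xm := by
    by_cases hmk : m = k
    · exact ⟨xbark, hmk ▸ hxbark, le_rfl⟩
    · exact hdom m hmk
  exact (hlt m).not_ge (hle.trans (hxm.le_of_feasible hxX hfeas))

/-- Removal of dominated points (Proposition 3.3). -/
theorem stmt_3 {σ : Type*} {ℓ : ℕ} (X : Set σ) (f : Fin ℓ → σ → ℝ)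
    (hpos : ∀ x ∈ X, ∀ i, 0 < f i x)
    (w : Fin ℓ → ℝ) (hw : ∀ i, 0 < w i) (hsum : ∑ i, w i = 1)
    (hS : ∀ j : Fin ℓ, ∃ x, SolWC X f w j x)
    (k : Fin ℓ) (xbark : σ) (hxbark : SolWC X f w k xbark)
    (hdom : ∀ r : Fin ℓ, r ≠ k → ∃ xbarr, SolWC X f w r xbarr ∧ f r xbark ≤ f r xbarr) :
    ¬ ∃ x ∈ X, ∀ i, f i x < f i xbark :=
  stmt_3_general X f w k xbark hxbark hdom
end

section
/- (Two-objective dominance elimination correctness) Let x̄₁ solve (P_w^1) and x̄₂ solve (P_w^2) for the same positive weights w = (w₁, w₂). If f₂(x̄₂) ≥ f₂(x̄₁), then x̄₁ is weakly efficient for the bi-objective problem (f₁, f₂) on X; symmetrically, if f₁(x̄₁) ≥ f₁(x̄₂), then x̄₂ is weakly efficient. -/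
/-!
The two constraints `w₂ f₂ ≤ w₁ f₁` and `w₁ f₁ ≤ w₂ f₂` cover `X`, so every `x ∈ X` is feasible
for one of the two scalarized problems and hence satisfies `f₁ x̄₁ ≤ f₁ x` or `f₂ x̄₂ ≤ f₂ x`.
A point strictly better than `x̄₁` in both objectives fails the first alternative, and when
`f₂ x̄₁ ≤ f₂ x̄₂` it fails the second as well. The second claim is the same argument with the
objectives exchanged.
-/

def IsWeaklyEfficient {σ β : Type*} [Preorder β] (X : Set σ) (f₁ f₂ : σ → β) (a : σ) : Prop :=
  ¬ ∃ x ∈ X, f₁ x < f₁ a ∧ f₂ x < f₂ a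

theorem IsWeaklyEfficient.symm {σ β : Type*} [Preorder β] {X : Set σ} {f₁ f₂ : σ → β} {a : σ}
    (h : IsWeaklyEfficient X f₁ f₂ a) : IsWeaklyEfficient X f₂ f₁ a := by
  rintro ⟨x, hx, h₂, h₁⟩
  exact h ⟨x, hx, h₁, h₂⟩

theorem isWeaklyEfficient_of_le_or_le {σ β : Type*} [Preorder β] {X : Set σ} {f₁ f₂ : σ → β}
    {a b : σ} (hcover : ∀ x ∈ X, f₁ a ≤ f₁ x ∨ f₂ b ≤ f₂ x) (hab : f₂ a ≤ f₂ b) :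
    IsWeaklyEfficient X f₁ f₂ a := by
  rintro ⟨x, hx, h₁, h₂⟩
  rcases hcover x hx with ha | hb
  · exact ha.not_gt h₁
  · exact hb.not_gt (h₂.trans_le hab)

theorem le_or_le_of_minimal_on_split {σ β γ : Type*} [Preorder β] [LinearOrder γ] {X : Set σ}
    {f₁ f₂ : σ → β} {g₁ g₂ : σ → γ} {a b : σ}
    (hopt₁ : ∀ x ∈ X, g₂ x ≤ g₁ x → f₁ a ≤ f₁ x)
    (hopt₂ : ∀ x ∈ X, g₁ x ≤ g₂ x → f₂ b ≤ f₂ x) :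
    ∀ x ∈ X, f₁ a ≤ f₁ x ∨ f₂ b ≤ f₂ x := fun x hx =>
  (le_total (g₂ x) (g₁ x)).imp (hopt₁ x hx) (hopt₂ x hx)

theorem stmt_14_general {σ : Type*} (X : Set σ) (f₁ f₂ : σ → ℝ)
    (w₁ w₂ : ℝ)
    (xbar1 xbar2 : σ)
    (hopt₁ : ∀ x ∈ X, w₂ * f₂ x ≤ w₁ * f₁ x → f₁ xbar1 ≤ f₁ x)
    (hopt₂ : ∀ x ∈ X, w₁ * f₁ x ≤ w₂ * f₂ x → f₂ xbar2 ≤ f₂ x) :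
    (f₂ xbar1 ≤ f₂ xbar2 → ¬ ∃ x ∈ X, f₁ x < f₁ xbar1 ∧ f₂ x < f₂ xbar1) ∧
    (f₁ xbar2 ≤ f₁ xbar1 → ¬ ∃ x ∈ X, f₁ x < f₁ xbar2 ∧ f₂ x < f₂ xbar2) := by
  have hcover : ∀ x ∈ X, f₁ xbar1 ≤ f₁ x ∨ f₂ xbar2 ≤ f₂ x :=
    le_or_le_of_minimal_on_split (g₁ := fun x => w₁ * f₁ x) (g₂ := fun x => w₂ * f₂ x) hopt₁ hopt₂
  refine ⟨isWeaklyEfficient_of_le_or_le hcover, fun h => ?_⟩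
  have hcover' : ∀ x ∈ X, f₂ xbar2 ≤ f₂ x ∨ f₁ xbar1 ≤ f₁ x := fun x hx => (hcover x hx).symm
  exact (isWeaklyEfficient_of_le_or_le hcover' h).symm

/-- Two-objective dominance elimination correctness. -/
theorem stmt_14 {σ : Type*} (X : Set σ) (f₁ f₂ : σ → ℝ)
    (hpos : ∀ x ∈ X, 0 < f₁ x ∧ 0 < f₂ x)
    (w₁ w₂ : ℝ) (hw₁ : 0 < w₁) (hw₂ : 0 < w₂)
    (xbar1 xbar2 : σ) (hxbar1 : xbar1 ∈ X) (hxbar2 : xbar2 ∈ X)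
    (hfeas₁ : w₂ * f₂ xbar1 ≤ w₁ * f₁ xbar1)
    (hopt₁ : ∀ x ∈ X, w₂ * f₂ x ≤ w₁ * f₁ x → f₁ xbar1 ≤ f₁ x)
    (hfeas₂ : w₁ * f₁ xbar2 ≤ w₂ * f₂ xbar2)
    (hopt₂ : ∀ x ∈ X, w₁ * f₁ x ≤ w₂ * f₂ x → f₂ xbar2 ≤ f₂ x) :
    (f₂ xbar1 ≤ f₂ xbar2 → ¬ ∃ x ∈ X, f₁ x < f₁ xbar1 ∧ f₂ x < f₂ xbar1) ∧
    (f₁ xbar2 ≤ f₁ xbar1 → ¬ ∃ x ∈ X, f₁ x < f₁ xbar2 ∧ f₂ x < f₂ xbar2) :=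
  stmt_14_general X f₁ f₂ w₁ w₂ xbar1 xbar2 hopt₁ hopt₂
end
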